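/- (Mean curvature of the first family S₁) With the second fundamental form coefficients L = a″ − ½(a − t a′)(1 + a′²), M = −½(1 + a′²), N = 0 of S₁, the mean curvature H = (E·N + G·L − 2F·M)/(2(EG − F²)) satisfies H = a″/(2(1 + a′²)) at every point of I × ℝ. In particular S₁ is a minimal surface of H₃ if and only if a″ ≡ 0 on I. -/

import Mathlib

noncomputable section

/-- Partial derivative with respect to the first (t) variable. -/
def pdx (f : ℝ × ℝ → ℝ) : ℝ × ℝ → ℝ := fun p => fderiv ℝ f p (1, 0)

/-- Partial derivative with respect to the second (s) variable. -/
def pdy (f : ℝ × ℝ → ℝ) : ℝ × ℝ → ℝ := fun p => fderiv ℝ f p (0, 1)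

/-- First fundamental form coefficient `E = 1 + a′² + ¼(a − t a′)²` of the ruled surface
`S₁ : r(t,s) = (t, a(t), s)` in the Heisenberg group `H₃`. -/
def aE (a : ℝ → ℝ) (t : ℝ) : ℝ := 1 + deriv a t ^ 2 + (a t - t * deriv a t) ^ 2 / 4

/-- First fundamental form coefficient `F = ½(a − t a′)` of `S₁`. -/
def aF (a : ℝ → ℝ) (t : ℝ) : ℝ := (a t - t * deriv a t) / 2

/-- `W = √(EG − F²) = √(1 + a′²)` for `S₁` (here `G = 1`). -/
def aW (a : ℝ → ℝ) (t : ℝ) : ℝ := Real.sqrt (1 + deriv a t ^ 2)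

/-- The Laplace–Beltrami operator of `S₁ : r(t,s) = (t, a(t), s)`, with the sign convention
`Δφ = −(1/W)[∂_t((G φ_t − F φ_s)/W) + ∂_s((−F φ_t + E φ_s)/W)]`, `G = 1`. -/
def lap1 (a : ℝ → ℝ) (φ : ℝ × ℝ → ℝ) : ℝ × ℝ → ℝ := fun p =>
  -(1 / aW a p.1) *
    (pdx (fun q => (1 * pdx φ q - aF a q.1 * pdy φ q) / aW a q.1) p +
     pdy (fun q => (-(aF a q.1) * pdx φ q + aE a q.1 * pdy φ q) / aW a q.1) p)

/-- Second fundamental form coefficient `L = a″ − ½(a − t a′)(1 + a′²)` of `S₁`. -/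
def aL (a : ℝ → ℝ) (t : ℝ) : ℝ :=
  deriv (deriv a) t - (a t - t * deriv a t) * (1 + deriv a t ^ 2) / 2

/-- Second fundamental form coefficient `M = −½(1 + a′²)` of `S₁`. -/
def aM (a : ℝ → ℝ) (t : ℝ) : ℝ := -(1 + deriv a t ^ 2) / 2

/-- Second fundamental form coefficient `N = 0` of `S₁`. -/
def aN (a : ℝ → ℝ) (t : ℝ) : ℝ := 0

/-- Mean curvature `H = (EN + GL − 2FM)/(2(EG − F²))` of `S₁` (with `G = 1`). -/
def aH (a : ℝ → ℝ) (t : ℝ) : ℝ :=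
  (aE a t * aN a t + 1 * aL a t - 2 * aF a t * aM a t) / (2 * (aE a t * 1 - aF a t ^ 2))

theorem aE_sub_aF_sq (a : ℝ → ℝ) (t : ℝ) : aE a t - aF a t ^ 2 = 1 + deriv a t ^ 2 := by
  unfold aE aF
  ring

theorem aL_sub_two_mul_aF_mul_aM (a : ℝ → ℝ) (t : ℝ) :
    aL a t - 2 * aF a t * aM a t = deriv (deriv a) t := by
  unfold aL aF aM
  ring

theorem aH_eq (a : ℝ → ℝ) (t : ℝ) :
    aH a t = deriv (deriv a) t / (2 * (1 + deriv a t ^ 2)) := by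
  unfold aH aN
  rw [mul_zero, zero_add, one_mul, mul_one, aL_sub_two_mul_aF_mul_aM, aE_sub_aF_sq]

theorem aH_eq_zero_iff (a : ℝ → ℝ) (t : ℝ) : aH a t = 0 ↔ deriv (deriv a) t = 0 := by
  have hW : 2 * (1 + deriv a t ^ 2) ≠ 0 := by positivity
  rw [aH_eq, div_eq_zero_iff, or_iff_left hW]

theorem mean_curvature_S1_general
    (I : Set ℝ)
    (a : ℝ → ℝ) :
    (∀ t ∈ I, aH a t = deriv (deriv a) t / (2 * (1 + deriv a t ^ 2))) ∧
    ((∀ t ∈ I, aH a t = 0) ↔ (∀ t ∈ I, deriv (deriv a) t = 0)) :=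
  ⟨fun t _ => aH_eq a t, forall₂_congr fun t _ => aH_eq_zero_iff a t⟩

/-- **Mean curvature of the first family `S₁`**: `H = a″/(2(1 + a′²))` at every point; in
particular `S₁` is a minimal surface of `H₃` iff `a″ ≡ 0` on `I`. -/
theorem mean_curvature_S1
    (I : Set ℝ) (hI : IsOpen I) (hIne : I.Nonempty) (hIconn : I.OrdConnected)
    (a : ℝ → ℝ) (ha : ContDiffOn ℝ (⊤ : ℕ∞) a I) :
    (∀ t ∈ I, aH a t = deriv (deriv a) t / (2 * (1 + deriv a t ^ 2))) ∧
    ((∀ t ∈ I, aH a t = 0) ↔ (∀ t ∈ I, deriv (deriv a) t = 0)) :=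
  mean_curvature_S1_general I a
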